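/- For the deformed geodesic Hamiltonian T̃_a = T_a/μ_a with μ_a = 1 − λ(x^2+y^2), the function K̃_{a2} = p_x^2 + (k_1 x^2/2 + k_2/x^2) p_z^2 + 2 λ x^2 T̃_a Poisson-commutes with T̃_a on the open set where μ_a ≠ 0, x ≠ 0, y ≠ 0. -/

import Mathlib

/-- Canonical Poisson bracket on phase space ℝ³ × ℝ³ with coordinates (x,y,z,pₓ,p_y,p_z). -/
noncomputable def pb (F G : ℝ → ℝ → ℝ → ℝ → ℝ → ℝ → ℝ) (x y z px py pz : ℝ) : ℝ :=
    deriv (fun t => F t y z px py pz) x * deriv (fun t => G x y z t py pz) px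
  + deriv (fun t => F x t z px py pz) y * deriv (fun t => G x y z px t pz) py
  + deriv (fun t => F x y t px py pz) z * deriv (fun t => G x y z px py t) pz
  - deriv (fun t => F x y z t py pz) px * deriv (fun t => G t y z px py pz) x
  - deriv (fun t => F x y z px t pz) py * deriv (fun t => G x t z px py pz) y
  - deriv (fun t => F x y z px py t) pz * deriv (fun t => G x y t px py pz) z

noncomputable def Va (k1 k2 k3 : ℝ) (x y : ℝ) : ℝ :=
  (1/2)*k1*(x^2+y^2) + k2/x^2 + k3/y^2

noncomputable def Tta (lam k1 k2 k3 : ℝ) : ℝ → ℝ → ℝ → ℝ → ℝ → ℝ → ℝ :=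
  fun x y _ px py pz =>
    ((1/2) * (px^2 + py^2 + Va k1 k2 k3 x y * pz^2)) / (1 - lam*(x^2+y^2))

/-!
Write `T̃ = N / μ` and `K̃ = K + 2λx² T̃` with `K = p_x² + (k₁x²/2 + k₂/x²) p_z²`. The `y`- and
`p_y`-derivatives of `K̃` are `2λx²` times those of `T̃` and nothing depends on `z`, so only the
`(x, p_x)` part of the bracket survives. There `∂ₓT̃ = (∂ₓN + 2λx T̃)/μ`, `∂_{pₓ}T̃ = pₓ/μ` and
`∂ₓN = ½ ∂ₓK`: the `2λx² ∂ₓT̃ ∂_{pₓ}T̃` terms cancel in pairs, the `2λx T̃` term of `∂ₓT̃` cancels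
against `∂ₓ(2λx²) T̃`, and what is left is `(2pₓ ∂ₓN − pₓ ∂ₓK)/μ = 0`.
-/

theorem hasDerivAt_singularOscillator (k1 k2 : ℝ) {x : ℝ} (hx : x ≠ 0) :
    HasDerivAt (fun t => k1*t^2/2 + k2/t^2) (k1*x - 2*k2/x^3) x := by
  have hsq := hasDerivAt_pow 2 x
  have h : HasDerivAt (fun t => k1*t^2/2 + k2/t^2) _ x :=
    ((hsq.const_mul k1).div_const 2).add ((hsq.inv (pow_ne_zero 2 hx)).const_mul k2)
  convert h using 1
  field_simp; ring

noncomputable def Kta2 (lam k1 k2 k3 : ℝ) : ℝ → ℝ → ℝ → ℝ → ℝ → ℝ → ℝ :=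
  fun x y z px py pz =>
    px^2 + (k1*x^2/2 + k2/x^2) * pz^2 + 2*lam*x^2 * Tta lam k1 k2 k3 x y z px py pz

section Partials

variable (lam k1 k2 k3 x y z px py pz : ℝ)

theorem hasDerivAt_Tta_x (hmu : 1 - lam*(x^2+y^2) ≠ 0) (hx : x ≠ 0) :
    HasDerivAt (fun t => Tta lam k1 k2 k3 t y z px py pz)
      (((k1*x - 2*k2/x^3) * pz^2 / 2 + 2*lam*x * Tta lam k1 k2 k3 x y z px py pz)
        / (1 - lam*(x^2+y^2))) x := by
  have hVa : HasDerivAt (fun t => Va k1 k2 k3 t y) (k1*x - 2*k2/x^3) x := by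
    have h : HasDerivAt (fun t => k1*t^2/2 + k2/t^2 + (k1*y^2/2 + k3/y^2)) _ x :=
      (hasDerivAt_singularOscillator k1 k2 hx).add_const _
    convert h using 1
    ext t; simp only [Va]; ring
  have hN := ((hVa.mul_const (pz^2)).const_add (px^2 + py^2)).const_mul (1/2 : ℝ)
  have hmu' := (((hasDerivAt_pow 2 x).add_const (y^2)).const_mul lam).const_sub 1
  have h : HasDerivAt (fun t => Tta lam k1 k2 k3 t y z px py pz) _ x := hN.div hmu' hmu
  convert h using 1
  simp only [Tta]; field_simp; ring

theorem hasDerivAt_Tta_px :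
    HasDerivAt (fun t => Tta lam k1 k2 k3 x y z t py pz) (px / (1 - lam*(x^2+y^2))) px := by
  have h : HasDerivAt (fun t => Tta lam k1 k2 k3 x y z t py pz) _ px :=
    ((((hasDerivAt_pow 2 px).add_const (py^2)).add_const
      (Va k1 k2 k3 x y * pz^2)).const_mul (1/2 : ℝ)).div_const (1 - lam*(x^2+y^2))
  convert h using 1
  ring

theorem hasDerivAt_Kta2_x {T' : ℝ}
    (hT : HasDerivAt (fun t => Tta lam k1 k2 k3 t y z px py pz) T' x) (hx : x ≠ 0) :
    HasDerivAt (fun t => Kta2 lam k1 k2 k3 t y z px py pz)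
      ((k1*x - 2*k2/x^3) * pz^2 + 4*lam*x * Tta lam k1 k2 k3 x y z px py pz
        + 2*lam*x^2 * T') x := by
  have h : HasDerivAt (fun t => Kta2 lam k1 k2 k3 t y z px py pz) _ x :=
    (((hasDerivAt_singularOscillator k1 k2 hx).mul_const (pz^2)).const_add (px^2)).add
      (((hasDerivAt_pow 2 x).const_mul (2*lam)).mul hT)
  convert h using 1
  ring

theorem hasDerivAt_Kta2_px {T' : ℝ}
    (hT : HasDerivAt (fun t => Tta lam k1 k2 k3 x y z t py pz) T' px) :
    HasDerivAt (fun t => Kta2 lam k1 k2 k3 x y z t py pz) (2*px + 2*lam*x^2 * T') px := by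
  have h : HasDerivAt (fun t => Kta2 lam k1 k2 k3 x y z t py pz) _ px :=
    ((hasDerivAt_pow 2 px).add_const _).add (hT.const_mul (2*lam*x^2))
  convert h using 1
  ring

theorem deriv_Kta2_y :
    deriv (fun t => Kta2 lam k1 k2 k3 x t z px py pz) y
      = 2*lam*x^2 * deriv (fun t => Tta lam k1 k2 k3 x t z px py pz) y :=
  (deriv_const_add _).trans (deriv_const_mul_field _)

theorem deriv_Kta2_py :
    deriv (fun t => Kta2 lam k1 k2 k3 x y z px t pz) py
      = 2*lam*x^2 * deriv (fun t => Tta lam k1 k2 k3 x y z px t pz) py :=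
  (deriv_const_add _).trans (deriv_const_mul_field _)

end Partials

theorem stmt_9_general (lam k1 k2 k3 : ℝ) (x y z px py pz : ℝ)
    (hmu : 1 - lam*(x^2+y^2) ≠ 0) (hx : x ≠ 0) :
    pb (Tta lam k1 k2 k3)
       (fun x y z' px py pz =>
          px^2 + (k1*x^2/2 + k2/x^2) * pz^2
            + 2*lam*x^2 * Tta lam k1 k2 k3 x y z' px py pz)
       x y z px py pz = 0 := by
  change pb (Tta lam k1 k2 k3) (Kta2 lam k1 k2 k3) x y z px py pz = 0
  have hTx := hasDerivAt_Tta_x lam k1 k2 k3 x y z px py pz hmu hx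
  have hTpx := hasDerivAt_Tta_px lam k1 k2 k3 x y z px py pz
  have hTz : deriv (fun t => Tta lam k1 k2 k3 x y t px py pz) z = 0 := deriv_const _ _
  have hKz : deriv (fun t => Kta2 lam k1 k2 k3 x y t px py pz) z = 0 :=
    deriv_const z (Kta2 lam k1 k2 k3 x y z px py pz)
  rw [pb, hTx.deriv, hTpx.deriv, (hasDerivAt_Kta2_x lam k1 k2 k3 x y z px py pz hTx hx).deriv,
    (hasDerivAt_Kta2_px lam k1 k2 k3 x y z px py pz hTpx).deriv, deriv_Kta2_y, deriv_Kta2_py,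
    hTz, hKz]
  ring

theorem stmt_9 (lam k1 k2 k3 : ℝ) (x y z px py pz : ℝ)
    (hmu : 1 - lam*(x^2+y^2) ≠ 0) (hx : x ≠ 0) (hy : y ≠ 0) :
    pb (Tta lam k1 k2 k3)
       (fun x y z' px py pz =>
          px^2 + (k1*x^2/2 + k2/x^2) * pz^2
            + 2*lam*x^2 * Tta lam k1 k2 k3 x y z' px py pz)
       x y z px py pz = 0 :=
  stmt_9_general lam k1 k2 k3 x y z px py pz hmu hx
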